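/- arXiv:2006.08157 — 2 statements merged into one kernel-verified Lean document; each statement's English description precedes it below -/
import Mathlib

section
/- If f : ℝ^d → ℝ is nonnegative with (α, L)-Hölder continuous gradient for α ∈ (0,1], then for all w, ‖∇f(w)‖₂ ≤ (1 + 1/α)^{α/(1+α)} · L^{1/(1+α)} · f(w)^{α/(1+α)}. -/
/-!
Hölder continuity of `∇f` gives the descent inequality
`f v ≤ f w + ⟪∇f w, v - w⟫ + L / (1 + α) * ‖v - w‖ ^ (1 + α)`.
A step of length `s` against the gradient and `f ≥ 0` then give
`s * ‖∇f w‖ - L / (1 + α) * s ^ (1 + α) ≤ f w` for every `s ≥ 0`,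
and the optimal step `s = (‖∇f w‖ / L) ^ (1 / α)` yields the bound.
-/

open Set
open scoped RealInnerProductSpace

theorem le_add_of_hasDerivAt_le_add_mul_rpow {φ φ' : ℝ → ℝ} {a C α : ℝ} (hα : -1 < α)
    (hφ : ContinuousOn φ (Icc 0 1)) (hφ' : ∀ t ∈ Ioo (0 : ℝ) 1, HasDerivAt φ (φ' t) t)
    (hbound : ∀ t ∈ Ioo (0 : ℝ) 1, φ' t ≤ a + C * t ^ α) :
    φ 1 ≤ φ 0 + a + C / (1 + α) := by
  have hα' : 0 < 1 + α := by linarith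
  set g : ℝ → ℝ := fun t ↦ φ t - (a * t + C / (1 + α) * t ^ (1 + α))
  have hg : ContinuousOn g (Icc 0 1) := hφ.sub (by fun_prop (disch := positivity))
  have hg' : ∀ t ∈ Ioo (0 : ℝ) 1, HasDerivAt g (φ' t - (a + C * t ^ α)) t := by
    intro t ht
    have hpow := Real.hasDerivAt_rpow_const (p := 1 + α) (Or.inl ht.1.ne')
    refine ((hφ' t ht).sub (((hasDerivAt_id t).const_mul a).add
      (hpow.const_mul (C / (1 + α))))).congr_deriv ?_
    rw [add_sub_cancel_left]
    field_simp
  have hanti : AntitoneOn g (Icc 0 1) := by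
    refine antitoneOn_of_hasDerivWithinAt_nonpos (f' := fun t ↦ φ' t - (a + C * t ^ α))
      (convex_Icc 0 1) hg ?_ ?_ <;> rw [interior_Icc]
    · exact fun t ht ↦ (hg' t ht).hasDerivWithinAt
    · exact fun t ht ↦ sub_nonpos.2 (hbound t ht)
  have := hanti (left_mem_Icc.2 zero_le_one) (right_mem_Icc.2 zero_le_one) zero_le_one
  simp only [g, Real.zero_rpow hα'.ne', Real.one_rpow] at this
  linarith

section HolderGradient

variable {E : Type*} [NormedAddCommGroup E] [InnerProductSpace ℝ E] [CompleteSpace E]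
  {f : E → ℝ} {L α : ℝ}

theorem inner_gradient_sub_le_of_holder (hα : -1 < α)
    (hholder : ∀ w v, ‖gradient f w - gradient f v‖ ≤ L * ‖w - v‖ ^ α) (w u : E) {t : ℝ}
    (ht : 0 ≤ t) :
    ⟪gradient f (w + t • u) - gradient f w, u⟫ ≤ L * ‖u‖ ^ (1 + α) * t ^ α :=
  calc ⟪gradient f (w + t • u) - gradient f w, u⟫
      ≤ ‖gradient f (w + t • u) - gradient f w‖ * ‖u‖ := real_inner_le_norm _ _
    _ ≤ L * ‖w + t • u - w‖ ^ α * ‖u‖ := by gcongr; exact hholder _ _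
    _ = L * ‖u‖ ^ (1 + α) * t ^ α := by
      rw [add_sub_cancel_left, norm_smul, Real.norm_of_nonneg ht, Real.mul_rpow ht (norm_nonneg _),
        Real.rpow_add' (norm_nonneg _) (by linarith), Real.rpow_one]
      ring

theorem le_add_inner_gradient_add_of_holder (hα : -1 < α) (hf : Differentiable ℝ f)
    (hholder : ∀ w v, ‖gradient f w - gradient f v‖ ≤ L * ‖w - v‖ ^ α) (w v : E) :
    f v ≤ f w + ⟪gradient f w, v - w⟫ + L / (1 + α) * ‖v - w‖ ^ (1 + α) := by
  have hline : ∀ t : ℝ, HasDerivAt (fun s : ℝ ↦ f (w + s • (v - w)))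
      ⟪gradient f (w + t • (v - w)), v - w⟫ t := by
    intro t
    have := ((hasDerivAt_id t).smul_const (v - w)).const_add w
    exact (hf _).hasGradientAt.hasFDerivAt.comp_hasDerivAt t (by simpa using this)
  have := le_add_of_hasDerivAt_le_add_mul_rpow hα
    (fun t _ ↦ (hline t).continuousAt.continuousWithinAt) (fun t _ ↦ hline t)
    (a := ⟪gradient f w, v - w⟫) (C := L * ‖v - w‖ ^ (1 + α)) fun t ht ↦ by
      have := inner_gradient_sub_le_of_holder hα hholder w (v - w) ht.1.le
      rw [inner_sub_left] at this
      linarith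
  simpa [mul_div_right_comm] using this

theorem mul_norm_gradient_sub_le_of_holder (hL : 0 ≤ L) (hα : -1 < α)
    (hf : Differentiable ℝ f) (hf₀ : ∀ w, 0 ≤ f w)
    (hholder : ∀ w v, ‖gradient f w - gradient f v‖ ≤ L * ‖w - v‖ ^ α) (w : E) {s : ℝ}
    (hs : 0 ≤ s) :
    s * ‖gradient f w‖ - L / (1 + α) * s ^ (1 + α) ≤ f w := by
  have hα' : 0 < 1 + α := by linarith
  set g := gradient f w
  rcases eq_or_ne g 0 with hg | hg
  · have : 0 ≤ L / (1 + α) * s ^ (1 + α) := by positivity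
    rw [hg, norm_zero, mul_zero]
    linarith [hf₀ w]
  have hg' : 0 < ‖g‖ := norm_pos_iff.2 hg
  have hstep := le_add_inner_gradient_add_of_holder hα hf hholder w (w - (s / ‖g‖) • g)
  rw [sub_sub_cancel_left, inner_neg_right, real_inner_smul_right, real_inner_self_eq_norm_sq,
    norm_neg, norm_smul, Real.norm_of_nonneg (by positivity), div_mul_cancel₀ _ hg'.ne'] at hstep
  have : s / ‖g‖ * ‖g‖ ^ 2 = s * ‖g‖ := by field_simp
  linarith [hf₀ (w - (s / ‖g‖) • g)]

end HolderGradient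

theorem le_of_forall_mul_sub_rpow_le {G L F α : ℝ} (hL : 0 < L) (hα : 0 < α)
    (h : ∀ s ≥ 0, s * G - L / (1 + α) * s ^ (1 + α) ≤ F) :
    G ≤ (1 + 1 / α) ^ (α / (1 + α)) * L ^ (1 / (1 + α)) * F ^ (α / (1 + α)) := by
  have hF : 0 ≤ F := by simpa [Real.zero_rpow (by positivity : 1 + α ≠ 0)] using h 0 le_rfl
  rcases le_or_gt G 0 with hG | hG
  · exact hG.trans (by positivity)
  set s := (G / L) ^ (1 / α)
  have hs : 0 ≤ s := by positivity
  have hGs : G = L * s ^ α := by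
    rw [← Real.rpow_mul (by positivity), one_div_mul_cancel hα.ne', Real.rpow_one]
    field_simp
  have hsα : s ^ (1 + α) = s * s ^ α := by
    rw [Real.rpow_add' hs (by positivity), Real.rpow_one]
  have hkey : s ^ (1 + α) ≤ (1 + 1 / α) * F / L := by
    have := h s hs
    rw [hGs, mul_left_comm, ← hsα] at this
    rw [le_div_iff₀ hL]
    calc s ^ (1 + α) * L = (1 + 1 / α) * (L * s ^ (1 + α) - L / (1 + α) * s ^ (1 + α)) := by
          field_simp; ring
      _ ≤ (1 + 1 / α) * F := by gcongr
  calc G = L * (s ^ (1 + α)) ^ (α / (1 + α)) := by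
        rw [hGs, ← Real.rpow_mul hs, mul_div_cancel₀ _ (by positivity : 1 + α ≠ 0)]
    _ ≤ L * ((1 + 1 / α) * F / L) ^ (α / (1 + α)) := by gcongr
    _ = (1 + 1 / α) ^ (α / (1 + α)) * L ^ (1 / (1 + α)) * F ^ (α / (1 + α)) := by
        have hexp : 1 / (1 + α) = 1 - α / (1 + α) := by field_simp; ring
        rw [Real.div_rpow (by positivity) hL.le, Real.mul_rpow (by positivity) hF, hexp,
          Real.rpow_sub hL, Real.rpow_one]
        ring

theorem self_bounding_holder {d : ℕ} (L α : ℝ) (hL : 0 < L)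
    (hα : α ∈ Set.Ioc (0 : ℝ) 1)
    (f : EuclideanSpace ℝ (Fin d) → ℝ)
    (hdiff : Differentiable ℝ f)
    (hnonneg : ∀ w, 0 ≤ f w)
    (hholder : ∀ w v, ‖gradient f w - gradient f v‖ ≤ L * ‖w - v‖ ^ α) :
    ∀ w, ‖gradient f w‖ ≤
      (1 + 1 / α) ^ (α / (1 + α)) * L ^ (1 / (1 + α)) * (f w) ^ (α / (1 + α)) := fun w ↦
  le_of_forall_mul_sub_rpow_le hL hα.1 fun _ hs ↦
    mul_norm_gradient_sub_le_of_holder hL.le (by linarith [hα.1]) hdiff hnonneg hholder w hs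
end

section
/- If f : ℝ^d → ℝ is convex with (α, L)-Hölder continuous gradient for α ∈ (0,1], then for all w, v: ⟨w - v, ∇f(w) - ∇f(v)⟩ ≥ (2α/(1+α)) · L^{-1/α} · ‖∇f(w) - ∇f(v)‖₂^{(1+α)/α}. -/
/-!
Hölder continuity of `∇f` gives the descent bound
`f y ≤ f v + ⟪∇f v, y - v⟫ + L ‖y - v‖^(1+α) / (1+α)`, and convexity gives
`f y ≥ f w + ⟪∇f w, y - w⟫`. Comparing the two at `y = v + z` bounds the Bregman divergence
`D_f(v, w)` below by `⟪∇f w - ∇f v, z⟫ - L ‖z‖^(1+α) / (1+α)` for every `z`; optimising over `z`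
along `∇f w - ∇f v` yields `α/(1+α) L^(-1/α) ‖∇f w - ∇f v‖^((1+α)/α)`. Adding this to the same
bound with `v` and `w` swapped gives the theorem, since `D_f(v, w) + D_f(w, v)` is the left-hand
inner product.
-/

open scoped RealInnerProductSpace

open Set

lemma le_add_add_div_of_deriv_sub_le_mul_rpow {g g' : ℝ → ℝ} {K α : ℝ} (hα : 0 ≤ α)
    (hg : ∀ t ∈ Icc (0 : ℝ) 1, HasDerivAt g (g' t) t)
    (hg' : ∀ t ∈ Ico (0 : ℝ) 1, g' t - g' 0 ≤ K * t ^ α) :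
    g 1 ≤ g 0 + g' 0 + K / (1 + α) := by
  have hα1 : (1 : ℝ) + α ≠ 0 := by positivity
  have hf : ∀ t ∈ Icc (0 : ℝ) 1, HasDerivAt (fun t => g t - t * g' 0) (g' t - g' 0) t :=
    fun t ht => (hg t ht).sub (hasDerivAt_mul_const (g' 0))
  have hB : ∀ t : ℝ, HasDerivAt (fun t => g 0 + K * t ^ (1 + α) / (1 + α)) (K * t ^ α) t := by
    intro t
    refine ((((Real.hasDerivAt_rpow_const (Or.inr (by linarith))).const_mul K).div_const
      (1 + α)).const_add (g 0)).congr_deriv ?_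
    rw [add_sub_cancel_left]
    field_simp
  have hcmp := image_le_of_deriv_right_le_deriv_boundary
    (fun t ht => (hf t ht).continuousAt.continuousWithinAt)
    (fun t ht => (hf t (Ico_subset_Icc_self ht)).hasDerivWithinAt)
    (by simp [Real.zero_rpow hα1])
    (fun t _ => (hB t).continuousAt.continuousWithinAt)
    (fun t _ => (hB t).hasDerivWithinAt) hg'
    (right_mem_Icc.2 zero_le_one)
  simp only [one_mul, Real.one_rpow, mul_one] at hcmp
  linarith

-- The right-hand side is the convex conjugate of `t ↦ L t^(1+α) / (1+α)` at `N`,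
-- attained at `t = (N / L)^(1/α)`.
lemma exists_nonneg_mul_sub_mul_rpow_div_eq {L α N : ℝ} (hL : 0 < L) (hα : 0 < α) (hN : 0 ≤ N) :
    ∃ t ≥ 0, t * N - L * t ^ (1 + α) / (1 + α)
      = α / (1 + α) * L ^ (-(1 / α)) * N ^ ((1 + α) / α) := by
  have hNL : 0 ≤ N / L := div_nonneg hN hL.le
  refine ⟨(N / L) ^ (1 / α), by positivity, ?_⟩
  set t := (N / L) ^ (1 / α) with ht
  have htα : t ^ α = N / L := by rw [ht, one_div, Real.rpow_inv_rpow hNL hα.ne']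
  have hLt : L * t ^ (1 + α) = t * N := by
    rw [Real.rpow_add' (by positivity) (by positivity), Real.rpow_one, htα]
    field_simp
  have htN : t * N = L ^ (-(1 / α)) * N ^ ((1 + α) / α) := by
    rw [ht, Real.div_rpow hN hL.le, Real.rpow_neg hL.le, add_div, div_self hα.ne',
      Real.rpow_add' hN (by positivity), Real.rpow_one]
    ring
  rw [hLt, mul_assoc (α / (1 + α)), ← htN]
  field_simp
  ring

section

variable {E : Type*} [NormedAddCommGroup E] [InnerProductSpace ℝ E] [CompleteSpace E]
  {f : E → ℝ}

lemma HasGradientAt.hasDerivAt_comp_add_smul {g x u : E} {t : ℝ}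
    (h : HasGradientAt f g (x + t • u)) :
    HasDerivAt (fun s : ℝ => f (x + s • u)) ⟪g, u⟫ t := by
  have hline : HasDerivAt (fun s : ℝ => x + s • u) u t := by
    simpa using ((hasDerivAt_id t).smul_const u).const_add x
  simpa [Function.comp_def] using h.hasFDerivAt.comp_hasDerivAt t hline

lemma ConvexOn.add_inner_gradient_le {s : Set E} (hf : ConvexOn ℝ s f) {x y : E} (hx : x ∈ s)
    (hy : y ∈ s) (hfx : DifferentiableAt ℝ f x) :
    f x + ⟪gradient f x, y - x⟫ ≤ f y := by
  have hline : ConvexOn ℝ (AffineMap.lineMap x y ⁻¹' s) (fun t : ℝ => f (x + t • (y - x))) := by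
    have hcomp : (fun t : ℝ => f (x + t • (y - x))) = f ∘ AffineMap.lineMap x y := by
      ext t
      simp [AffineMap.lineMap_apply_module', add_comm]
    exact hcomp ▸ hf.comp_affineMap (AffineMap.lineMap x y)
  have hslope := hline.le_slope_of_hasDerivAt (x := 0) (y := 1) (by simpa using hx)
    (by simpa using hy) one_pos
    (HasGradientAt.hasDerivAt_comp_add_smul (by simpa using hfx.hasGradientAt))
  simp only [slope_def_field, zero_smul, add_zero, one_smul, add_sub_cancel, sub_zero, div_one]
    at hslope
  linarith

lemma apply_le_add_inner_gradient_add_mul_rpow {L α : ℝ} (hα : 0 ≤ α)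
    (hdiff : Differentiable ℝ f)
    (hholder : ∀ w v, ‖gradient f w - gradient f v‖ ≤ L * ‖w - v‖ ^ α) (x y : E) :
    f y ≤ f x + ⟪gradient f x, y - x⟫ + L * ‖y - x‖ ^ (1 + α) / (1 + α) := by
  set u := y - x
  have hderiv : ∀ t : ℝ, HasDerivAt (fun s : ℝ => f (x + s • u)) ⟪gradient f (x + t • u), u⟫ t :=
    fun t => (hdiff _).hasGradientAt.hasDerivAt_comp_add_smul
  have hbound : ∀ t ∈ Ico (0 : ℝ) 1,
      ⟪gradient f (x + t • u), u⟫ - ⟪gradient f (x + (0 : ℝ) • u), u⟫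
        ≤ L * ‖u‖ ^ (1 + α) * t ^ α := by
    intro t ht
    rw [zero_smul, add_zero, ← inner_sub_left]
    calc ⟪gradient f (x + t • u) - gradient f x, u⟫
        ≤ ‖gradient f (x + t • u) - gradient f x‖ * ‖u‖ := real_inner_le_norm _ _
      _ ≤ L * ‖t • u‖ ^ α * ‖u‖ := by
        gcongr
        simpa using hholder (x + t • u) x
      _ = L * ‖u‖ ^ (1 + α) * t ^ α := by
        rw [norm_smul, Real.norm_of_nonneg ht.1, Real.mul_rpow ht.1 (norm_nonneg u),
          Real.rpow_add' (norm_nonneg u) (by positivity), Real.rpow_one]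
        ring
  have h := le_add_add_div_of_deriv_sub_le_mul_rpow hα (fun t _ => hderiv t) hbound
  simp only [zero_smul, add_zero, one_smul, u, add_sub_cancel] at h
  exact h

noncomputable def bregman (f : E → ℝ) (v w : E) : ℝ := f v - f w - ⟪gradient f w, v - w⟫

lemma bregman_add_bregman (f : E → ℝ) (v w : E) :
    bregman f v w + bregman f w v = ⟪w - v, gradient f w - gradient f v⟫ := by
  simp only [bregman, inner_sub_left, inner_sub_right, real_inner_comm]
  ring

lemma inner_sub_mul_rpow_div_le_bregman {L α : ℝ} (hα : 0 ≤ α) (hdiff : Differentiable ℝ f)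
    (hconv : ConvexOn ℝ univ f)
    (hholder : ∀ w v, ‖gradient f w - gradient f v‖ ≤ L * ‖w - v‖ ^ α) (v w z : E) :
    ⟪gradient f w - gradient f v, z⟫ - L * ‖z‖ ^ (1 + α) / (1 + α) ≤ bregman f v w := by
  have hlower := hconv.add_inner_gradient_le (mem_univ w) (mem_univ (v + z)) (hdiff w)
  have hupper := apply_le_add_inner_gradient_add_mul_rpow hα hdiff hholder v (v + z)
  rw [add_sub_cancel_left] at hupper
  rw [show v + z - w = (v - w) + z by abel, inner_add_right] at hlower
  rw [bregman, inner_sub_left]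
  linarith

lemma mul_rpow_le_bregman {L α : ℝ} (hL : 0 < L) (hα : 0 < α) (hdiff : Differentiable ℝ f)
    (hconv : ConvexOn ℝ univ f)
    (hholder : ∀ w v, ‖gradient f w - gradient f v‖ ≤ L * ‖w - v‖ ^ α) (v w : E) :
    α / (1 + α) * L ^ (-(1 / α)) * ‖gradient f w - gradient f v‖ ^ ((1 + α) / α)
      ≤ bregman f v w := by
  set g := gradient f w - gradient f v
  obtain ⟨t, ht, hval⟩ := exists_nonneg_mul_sub_mul_rpow_div_eq hL hα (norm_nonneg g)
  have hinner : ⟪g, (t / ‖g‖) • g⟫ = t * ‖g‖ := by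
    rw [real_inner_smul_right, real_inner_self_eq_norm_sq]
    rcases eq_or_ne ‖g‖ 0 with hg | hg
    · simp [hg]
    · field_simp
  have hnorm : ‖(t / ‖g‖) • g‖ ≤ t := by
    rw [norm_smul, Real.norm_of_nonneg (by positivity)]
    rcases eq_or_ne ‖g‖ 0 with hg | hg
    · simpa [hg] using ht
    · rw [div_mul_cancel₀ t hg]
  calc α / (1 + α) * L ^ (-(1 / α)) * ‖g‖ ^ ((1 + α) / α)
      = t * ‖g‖ - L * t ^ (1 + α) / (1 + α) := hval.symm
    _ ≤ ⟪g, (t / ‖g‖) • g⟫ - L * ‖(t / ‖g‖) • g‖ ^ (1 + α) / (1 + α) := by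
      rw [hinner]
      gcongr
    _ ≤ bregman f v w := inner_sub_mul_rpow_div_le_bregman hα.le hdiff hconv hholder v w _

end

theorem cocoercivity_holder {d : ℕ} (L α : ℝ) (hL : 0 < L)
    (hα : α ∈ Set.Ioc (0 : ℝ) 1)
    (f : EuclideanSpace ℝ (Fin d) → ℝ)
    (hdiff : Differentiable ℝ f)
    (hconv : ConvexOn ℝ Set.univ f)
    (hholder : ∀ w v, ‖gradient f w - gradient f v‖ ≤ L * ‖w - v‖ ^ α) :
    ∀ w v, (2 * α / (1 + α)) * L ^ (-(1 / α)) *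
        ‖gradient f w - gradient f v‖ ^ ((1 + α) / α)
      ≤ ⟪w - v, gradient f w - gradient f v⟫ := by
  intro w v
  have hvw := mul_rpow_le_bregman hL hα.1 hdiff hconv hholder v w
  have hwv := mul_rpow_le_bregman hL hα.1 hdiff hconv hholder w v
  rw [norm_sub_rev] at hwv
  rw [← bregman_add_bregman, mul_div_assoc, two_mul, add_mul, add_mul]
  exact add_le_add hvw hwv
end
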